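/- Let $R$ be a reduced commutative ring and let $f \in R[T,T^{-1}]$ be a Laurent polynomial such that for every ring homomorphism $\varphi : R \to K$ into a field $K$, the image of $f$ under the induced map $R[T,T^{-1}] \to K[T,T^{-1}]$ is a constant, i.e., lies in the image of $C : K \to K[T,T^{-1}]$. Then $f$ itself is constant: $f = C(a)$ for some $a \in R$. -/

import Mathlib

/-! The coefficient of `T^n` commutes with base change, so each coefficient `f.coeff n`, `n ≠ 0`,
is killed by every map from `R` to a field. In a reduced ring such an element is zero: otherwise
it is not nilpotent, hence avoids some prime `p` and survives in the fraction field of `R ⧸ p`. -/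

open LaurentPolynomial

/-- The ring homomorphism `R[T,T⁻¹] →+* K[T,T⁻¹]` induced by a ring homomorphism
`φ : R →+* K`, applying `φ` to each coefficient (so `C r ↦ C (φ r)` and `T n ↦ T n`). -/
noncomputable def LaurentPolynomial.mapRingHom {R K : Type*} [CommSemiring R] [CommSemiring K]
    (φ : R →+* K) : LaurentPolynomial R →+* LaurentPolynomial K :=
  AddMonoidAlgebra.liftNCRingHom ((C : K →+* LaurentPolynomial K).comp φ)
    { toFun := fun n => T (Multiplicative.toAdd n)
      map_one' := T_zero (R := K)
      map_mul' := fun m n => T_add (R := K) (Multiplicative.toAdd m) (Multiplicative.toAdd n) }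
    fun _ _ => Commute.all _ _

theorem IsReduced.eq_zero_of_forall_map_field_eq_zero {R : Type u} [CommRing R] [IsReduced R]
    {r : R} (h : ∀ (K : Type u) [Field K] (φ : R →+* K), φ r = 0) : r = 0 := by
  refine IsReduced.eq_zero r (nilpotent_iff_mem_prime.mpr fun p hp => ?_)
  let φ : R →+* FractionRing (R ⧸ p) :=
    (algebraMap (R ⧸ p) (FractionRing (R ⧸ p))).comp (Ideal.Quotient.mk p)
  have hφ : algebraMap (R ⧸ p) (FractionRing (R ⧸ p)) (Ideal.Quotient.mk p r) = 0 := h _ φ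
  rw [← Ideal.Quotient.eq_zero_iff_mem]
  exact IsFractionRing.injective (R ⧸ p) (FractionRing (R ⧸ p)) (hφ.trans (map_zero _).symm)

namespace LaurentPolynomial

theorem coeff_mapRingHom {R K : Type*} [CommSemiring R] [CommSemiring K] (φ : R →+* K)
    (f : R[T;T⁻¹]) (n : ℤ) : (mapRingHom φ f).coeff n = φ (f.coeff n) := by
  induction f using LaurentPolynomial.induction_on' with
  | add p q hp hq => simp [hp, hq]
  | C_mul_T m a =>
    have hmap : mapRingHom φ (.single m a) = .single m (φ a) :=
      (AddMonoidAlgebra.liftNC_single _ _ _ _).trans (single_eq_C_mul_T _ _).symm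
    rw [← single_eq_C_mul_T, hmap, AddMonoidAlgebra.coeff_single, AddMonoidAlgebra.coeff_single,
      Finsupp.single_apply, Finsupp.single_apply, apply_ite φ, map_zero]

theorem eq_C_coeff_zero_of_coeff_eq_zero {R : Type*} [Semiring R] {f : R[T;T⁻¹]}
    (h : ∀ n ≠ 0, f.coeff n = 0) : f = C (f.coeff 0) :=
  LaurentPolynomial.ext fun n => by
    by_cases hn : n = 0
    · simp [hn]
    · simp [hn, h n hn]

end LaurentPolynomial

/-- Over a reduced commutative ring `R`, a Laurent polynomial whose image over every field
(under the map induced by any ring homomorphism from `R` to a field) is constant is itself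
constant. -/
theorem laurentPolynomial_eq_C_of_pointwise_constant
    {R : Type u} [CommRing R] [IsReduced R] (f : LaurentPolynomial R)
    (h : ∀ (K : Type u) [Field K] (φ : R →+* K),
      ∃ a : K, LaurentPolynomial.mapRingHom φ f = C a) :
    ∃ a : R, f = C a := by
  refine ⟨f.coeff 0, eq_C_coeff_zero_of_coeff_eq_zero fun n hn => ?_⟩
  refine IsReduced.eq_zero_of_forall_map_field_eq_zero fun K _ φ => ?_
  obtain ⟨a, ha⟩ := h K φ
  rw [← coeff_mapRingHom, ha, C_apply, if_neg hn]
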